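/- If X ⊆ P is nonempty, p, q ∈ P with p ≠ q, X ∪ {p} ∉ Γ, X ∪ {q} ∉ Γ, and X ∪ {p, q} ∈ Γ, then 2 ≤ h(X ∪ {p, q}) − h(X), i.e., 2·H(S) ≤ H(X ∪ {p, q}) − H(X). -/

import Mathlib

open MeasureTheory Finset

/-- Shannon entropy of a random variable with values in a finite type:
`H(f) = ∑ₐ −P(f = a)·log P(f = a)`. -/
noncomputable def shannonEntropy {Ω : Type} [MeasurableSpace Ω] {α : Type} [Fintype α]
    (μ : Measure Ω) (f : Ω → α) : ℝ :=
  ∑ a : α, Real.negMulLog ((μ (f ⁻¹' {a})).toReal)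

/-- A family of random variables on a common probability space: one (finite-valued)
random variable `secret` for the secret, and one random variable `share p` for the
share of each participant `p`. -/
structure Scheme (P : Type) [Fintype P] [DecidableEq P] where
  (Ω : Type)
  [mΩ : MeasurableSpace Ω]
  (μ : Measure Ω)
  [prob : IsProbabilityMeasure μ]
  (SecT : Type)
  [secFin : Fintype SecT]
  (ShT : P → Type)
  [shFin : ∀ p, Fintype (ShT p)]
  (secret : Ω → SecT)
  (share : (p : P) → Ω → ShT p)
  (secret_meas : ∀ s : Set SecT, MeasurableSet (secret ⁻¹' s))
  (share_meas : ∀ p, ∀ s : Set (ShT p), MeasurableSet (share p ⁻¹' s))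

namespace Scheme

variable {P : Type} [Fintype P] [DecidableEq P]

/-- `H(S)`: the entropy of the secret. -/
noncomputable def Hsec (S : Scheme P) : ℝ :=
  letI := S.mΩ; letI := S.secFin
  shannonEntropy S.μ S.secret

/-- `H(X)`: the joint entropy of the shares of the participants in `X`. -/
noncomputable def Hset (S : Scheme P) (X : Finset P) : ℝ :=
  letI := S.mΩ; letI := S.shFin
  shannonEntropy S.μ (fun ω => fun p : {y // y ∈ X} => S.share p.1 ω)

/-- `H(X ∪ {S})`: the joint entropy of the shares of the participants in `X`
together with the secret. -/
noncomputable def HsetS (S : Scheme P) (X : Finset P) : ℝ :=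
  letI := S.mΩ; letI := S.secFin; letI := S.shFin
  shannonEntropy S.μ (fun ω => ((fun p : {y // y ∈ X} => S.share p.1 ω), S.secret ω))

/-- The normalized entropy `h(X) = H(X)/H(S)`. -/
noncomputable def hset (S : Scheme P) (X : Finset P) : ℝ := S.Hset X / S.Hsec

/-- The conditional normalized entropy `h(X|Y) = h(X ∪ Y) − h(Y)`. -/
noncomputable def hcond (S : Scheme P) (X Y : Finset P) : ℝ :=
  S.hset (X ∪ Y) - S.hset Y

/-- `Σ` is a perfect secret sharing scheme for the access structure `Γ`:
the conditional entropy `H(S|X) = H(X ∪ {S}) − H(X)` equals `0` for every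
qualified set `X` and equals `H(S)` for every unqualified set `X`. -/
def IsPerfect (S : Scheme P) (Γ : Finset P → Prop) : Prop :=
  (∀ X : Finset P, Γ X → S.HsetS X - S.Hset X = 0) ∧
  (∀ X : Finset P, ¬ Γ X → S.HsetS X - S.Hset X = S.Hsec)

end Scheme

/-!
Write `A`, `B` for the shares of `p`, `q`, `K` for the shares of `X`, and `Z` for the secret.
Perfectness gives `H(Z | A K) = H(Z | B K) = H(Z)` and `H(Z | A B K) = 0`, hence
`H(A K) = H(A K Z) - H(Z) ≤ H(A B K Z) - H(Z) = H(A B K) - H(Z)`, and likewise for `B K`.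
Submodularity of entropy, `H(A B K) + H(K) ≤ H(A K) + H(B K)`, then yields
`H(A B K) - H(K) ≥ 2 H(Z)`.
-/

namespace Real

lemma negMulLog_add_le {x y : ℝ} (hx : 0 ≤ x) (hy : 0 ≤ y) :
    negMulLog (x + y) ≤ negMulLog x + negMulLog y := by
  rcases hx.eq_or_lt with rfl | hx
  · simp
  rcases hy.eq_or_lt with rfl | hy
  · simp
  have hlx : log x ≤ log (x + y) := log_le_log hx (by linarith)
  have hly : log y ≤ log (x + y) := log_le_log hy (by linarith)
  simp only [negMulLog, neg_mul]
  nlinarith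

lemma negMulLog_sum_le {ι : Type*} (s : Finset ι) (f : ι → ℝ) (hf : ∀ i ∈ s, 0 ≤ f i) :
    negMulLog (∑ i ∈ s, f i) ≤ ∑ i ∈ s, negMulLog (f i) :=
  Finset.le_sum_of_subadditive_on_pred negMulLog (0 ≤ ·) negMulLog_zero.le
    (fun _ _ => negMulLog_add_le) (fun _ _ => add_nonneg) f hf

/-- Gibbs' inequality in pointwise form: `p log (w / p) ≤ w - p`. -/
lemma negMulLog_add_mul_log_le {p w : ℝ} (hp : 0 ≤ p) (hw : 0 ≤ w) (hpw : 0 < p → 0 < w) :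
    negMulLog p + p * log w ≤ w - p := by
  rcases hp.eq_or_lt with rfl | hp
  · simpa using hw
  have hw := hpw hp
  calc negMulLog p + p * log w = p * log (w / p) := by
        rw [log_div hw.ne' hp.ne', negMulLog]; ring
    _ ≤ p * (w / p - 1) := by gcongr; exact log_le_sub_one_of_pos (div_pos hw hp)
    _ = w - p := by field_simp

open Finset in
/-- Mutual information is nonnegative (for an unnormalised joint distribution `p`). -/
lemma sum_sum_negMulLog_add_negMulLog_le {α β : Type*} [Fintype α] [Fintype β]
    (p : α → β → ℝ) (hp : ∀ a b, 0 ≤ p a b) :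
    ∑ a, ∑ b, negMulLog (p a b) + negMulLog (∑ a, ∑ b, p a b)
      ≤ ∑ a, negMulLog (∑ b, p a b) + ∑ b, negMulLog (∑ a, p a b) := by
  set r : α → ℝ := fun a => ∑ b, p a b
  set q : β → ℝ := fun b => ∑ a, p a b
  set s : ℝ := ∑ a, r a
  have hsq : ∑ b, q b = s := sum_comm
  have hpr : ∀ a b, p a b ≤ r a := fun a b => single_le_sum (fun b _ => hp a b) (mem_univ b)
  have hpq : ∀ a b, p a b ≤ q b := fun a b => single_le_sum (fun a _ => hp a b) (mem_univ a)
  have hrs : ∀ a, r a ≤ s := fun a =>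
    single_le_sum (fun a _ => sum_nonneg fun b _ => hp a b) (mem_univ a)
  -- Gibbs' inequality against the product of the marginals `r a * q b / s`
  have gibbs : ∀ a b, negMulLog (p a b) + p a b * (log (r a) + log (q b) - log s)
      ≤ r a * q b / s - p a b := by
    intro a b
    rcases (hp a b).eq_or_lt with h0 | hpos
    · rw [← h0]
      simpa using div_nonneg (mul_nonneg ((hp a b).trans (hpr a b)) ((hp a b).trans (hpq a b)))
        ((hp a b).trans ((hpr a b).trans (hrs a)))
    have hr := hpos.trans_le (hpr a b)
    have hq := hpos.trans_le (hpq a b)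
    have hs := hr.trans_le (hrs a)
    rw [← log_mul hr.ne' hq.ne', ← log_div (by positivity) hs.ne']
    exact negMulLog_add_mul_log_le hpos.le (by positivity) fun _ => by positivity
  have hsum := sum_le_sum fun a (_ : a ∈ univ) => sum_le_sum fun b (_ : b ∈ univ) => gibbs a b
  have hR : ∑ a, ∑ b, (r a * q b / s - p a b) = 0 := by
    simp only [sum_sub_distrib, ← sum_div, ← sum_mul_sum, hsq]
    show s * s / s - s = 0
    rw [mul_self_div_self, sub_self]
  rw [hR] at hsum
  simp only [mul_add, mul_sub, sum_add_distrib, sum_sub_distrib, ← sum_mul] at hsum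
  rw [sum_comm (f := fun a b => p a b * log (q b))] at hsum
  simp only [← sum_mul, negMulLog, neg_mul, sum_neg_distrib, r, q, s] at hsum ⊢
  linarith

end Real

open Real Finset

section Entropy

variable {Ω : Type} [MeasurableSpace Ω]

lemma measurableSet_preimage_of_singleton {α : Type*} [Countable α] {f : Ω → α}
    (hf : ∀ a, MeasurableSet (f ⁻¹' {a})) (s : Set α) : MeasurableSet (f ⁻¹' s) := by
  rw [← Set.biUnion_of_singleton s, Set.preimage_iUnion₂]
  exact .biUnion s.to_countable fun a _ => hf a

lemma measurableSet_preimage_prodMk {α β : Type*} [Countable α] [Countable β]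
    {f : Ω → α} {g : Ω → β} (hf : ∀ s : Set α, MeasurableSet (f ⁻¹' s))
    (hg : ∀ s : Set β, MeasurableSet (g ⁻¹' s)) (s : Set (α × β)) :
    MeasurableSet ((fun ω => (f ω, g ω)) ⁻¹' s) := by
  refine measurableSet_preimage_of_singleton (fun ⟨a, b⟩ => ?_) s
  rw [← Set.singleton_prod_singleton, Set.mk_preimage_prod]
  exact (hf _).inter (hg _)

lemma measurableSet_preimage_pi {ι : Type*} [Finite ι] {T : ι → Type*} [∀ i, Countable (T i)]
    {V : ∀ i, Ω → T i} (hV : ∀ i (s : Set (T i)), MeasurableSet (V i ⁻¹' s))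
    (s : Set (∀ i, T i)) : MeasurableSet ((fun ω i => V i ω) ⁻¹' s) := by
  refine measurableSet_preimage_of_singleton (fun x => ?_) s
  have : (fun ω i => V i ω) ⁻¹' {x} = ⋂ i, V i ⁻¹' {x i} := by
    ext; simp [funext_iff]
  rw [this]
  exact .iInter fun i => hV i _

variable {μ : Measure Ω} [IsFiniteMeasure μ]

lemma measureReal_eq_sum_inter_preimage {β : Type*} [Fintype β] {A : Set Ω}
    (hA : MeasurableSet A) {g : Ω → β} (hg : ∀ s : Set β, MeasurableSet (g ⁻¹' s)) :
    μ.real A = ∑ b, μ.real (A ∩ g ⁻¹' {b}) := by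
  rw [← measureReal_biUnion_finset _ fun b _ => hA.inter (hg _)]
  · congr
    ext
    simp
  · intro b _ b' _ hb
    exact ((Set.disjoint_singleton.2 hb).preimage g).mono Set.inter_subset_right
      Set.inter_subset_right

lemma shannonEntropy_comp_le {α β : Type} [Fintype α] [Fintype β] {f : Ω → α}
    (hf : ∀ s : Set α, MeasurableSet (f ⁻¹' s)) (g : α → β) :
    shannonEntropy μ (fun ω => g (f ω)) ≤ shannonEntropy μ f := by
  classical
  simp only [shannonEntropy, ← measureReal_def]
  calc ∑ b, negMulLog (μ.real ((fun ω => g (f ω)) ⁻¹' {b}))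
      = ∑ b, negMulLog (∑ a ∈ univ.filter (g · = b), μ.real (f ⁻¹' {a})) := by
        refine sum_congr rfl fun b _ => ?_
        rw [sum_measureReal_preimage_singleton _ fun a _ => hf _]
        congr 2
        ext
        simp
    _ ≤ ∑ b, ∑ a ∈ univ.filter (g · = b), negMulLog (μ.real (f ⁻¹' {a})) :=
        sum_le_sum fun b _ => negMulLog_sum_le _ _ fun _ _ => measureReal_nonneg
    _ = ∑ a, negMulLog (μ.real (f ⁻¹' {a})) := sum_fiberwise _ _ _

lemma shannonEntropy_comp_of_leftInverse {α β : Type} [Fintype α] [Fintype β] {f : Ω → α}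
    (hf : ∀ s : Set α, MeasurableSet (f ⁻¹' s)) {g : α → β} {g' : β → α}
    (hg : Function.LeftInverse g' g) :
    shannonEntropy μ (fun ω => g (f ω)) = shannonEntropy μ f := by
  refine (shannonEntropy_comp_le hf g).antisymm ?_
  calc shannonEntropy μ f = shannonEntropy μ (fun ω => g' (g (f ω))) := by simp only [hg _]
    _ ≤ _ := shannonEntropy_comp_le (fun s => hf (g ⁻¹' s)) g'

lemma shannonEntropy_submodular {α β γ : Type} [Fintype α] [Fintype β] [Fintype γ]
    {f : Ω → α} {g : Ω → β} {k : Ω → γ} (hf : ∀ s : Set α, MeasurableSet (f ⁻¹' s))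
    (hg : ∀ s : Set β, MeasurableSet (g ⁻¹' s)) (hk : ∀ s : Set γ, MeasurableSet (k ⁻¹' s)) :
    shannonEntropy μ (fun ω => (k ω, (f ω, g ω))) + shannonEntropy μ k
      ≤ shannonEntropy μ (fun ω => (k ω, f ω)) + shannonEntropy μ (fun ω => (k ω, g ω)) := by
  set m : γ → α → β → ℝ := fun c a b => μ.real (k ⁻¹' {c} ∩ f ⁻¹' {a} ∩ g ⁻¹' {b})
  have hkf : ∀ c a, μ.real (k ⁻¹' {c} ∩ f ⁻¹' {a}) = ∑ b, m c a b := fun c a =>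
    measureReal_eq_sum_inter_preimage ((hk _).inter (hf _)) hg
  have hkg : ∀ c b, μ.real (k ⁻¹' {c} ∩ g ⁻¹' {b}) = ∑ a, m c a b := fun c b => by
    simp only [m, Set.inter_right_comm _ (f ⁻¹' _)]
    exact measureReal_eq_sum_inter_preimage ((hk _).inter (hg _)) hf
  have hk' : ∀ c, μ.real (k ⁻¹' {c}) = ∑ a, ∑ b, m c a b := fun c => by
    simp only [← hkf]
    exact measureReal_eq_sum_inter_preimage (hk _) hf
  have eKFG : shannonEntropy μ (fun ω => (k ω, (f ω, g ω)))
      = ∑ c, ∑ a, ∑ b, negMulLog (m c a b) := by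
    simp only [shannonEntropy, ← measureReal_def, Fintype.sum_prod_type, m,
      ← Set.singleton_prod_singleton, Set.mk_preimage_prod, Set.inter_assoc]
  have eK : shannonEntropy μ k = ∑ c, negMulLog (∑ a, ∑ b, m c a b) := by
    simp only [shannonEntropy, ← measureReal_def, hk']
  have eKF : shannonEntropy μ (fun ω => (k ω, f ω)) = ∑ c, ∑ a, negMulLog (∑ b, m c a b) := by
    simp only [shannonEntropy, ← measureReal_def, Fintype.sum_prod_type,
      ← Set.singleton_prod_singleton, Set.mk_preimage_prod, hkf]
  have eKG : shannonEntropy μ (fun ω => (k ω, g ω)) = ∑ c, ∑ b, negMulLog (∑ a, m c a b) := by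
    simp only [shannonEntropy, ← measureReal_def, Fintype.sum_prod_type,
      ← Set.singleton_prod_singleton, Set.mk_preimage_prod, hkg]
  rw [eKFG, eK, eKF, eKG, ← sum_add_distrib, ← sum_add_distrib]
  exact sum_le_sum fun c _ => sum_sum_negMulLog_add_negMulLog_le (m c) fun _ _ => measureReal_nonneg

section Tuples

variable {ι : Type} [DecidableEq ι] {T : ι → Type} [∀ i, Fintype (T i)] {V : ∀ i, Ω → T i}

lemma shannonEntropy_pi_mono (hV : ∀ i (s : Set (T i)), MeasurableSet (V i ⁻¹' s))
    {s t : Finset ι} (hst : s ⊆ t) :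
    shannonEntropy μ (fun ω (i : s) => V i ω) ≤ shannonEntropy μ (fun ω (i : t) => V i ω) :=
  shannonEntropy_comp_le (measurableSet_preimage_pi fun i : t => hV i) (Finset.restrict₂ hst)

lemma shannonEntropy_pi_prodMk_mono (hV : ∀ i (s : Set (T i)), MeasurableSet (V i ⁻¹' s))
    {γ : Type} [Fintype γ] {Z : Ω → γ} (hZ : ∀ s : Set γ, MeasurableSet (Z ⁻¹' s))
    {s t : Finset ι} (hst : s ⊆ t) :
    shannonEntropy μ (fun ω => ((fun i : s => V i ω), Z ω))
      ≤ shannonEntropy μ (fun ω => ((fun i : t => V i ω), Z ω)) :=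
  shannonEntropy_comp_le
    (measurableSet_preimage_prodMk (measurableSet_preimage_pi fun i : t => hV i) hZ)
    (Prod.map (Finset.restrict₂ hst) id)

lemma shannonEntropy_pi_union_add_inter_le (hV : ∀ i (s : Set (T i)), MeasurableSet (V i ⁻¹' s))
    (s t : Finset ι) :
    shannonEntropy μ (fun ω (i : ↥(s ∪ t)) => V i ω)
        + shannonEntropy μ (fun ω (i : ↥(s ∩ t)) => V i ω)
      ≤ shannonEntropy μ (fun ω (i : s) => V i ω) + shannonEntropy μ (fun ω (i : t) => V i ω) := by
  have hmeas {u : Finset ι} : ∀ A, MeasurableSet ((fun ω (i : u) => V i ω) ⁻¹' A) :=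
    measurableSet_preimage_pi fun i : u => hV i
  have hs : shannonEntropy μ (fun ω => ((fun i : ↥(s ∩ t) => V i ω), fun i : s => V i ω))
      = shannonEntropy μ (fun ω (i : s) => V i ω) :=
    shannonEntropy_comp_of_leftInverse hmeas (g := fun x => (restrict₂ inter_subset_left x, x))
      (g' := Prod.snd) fun _ => rfl
  have ht : shannonEntropy μ (fun ω => ((fun i : ↥(s ∩ t) => V i ω), fun i : t => V i ω))
      = shannonEntropy μ (fun ω (i : t) => V i ω) :=
    shannonEntropy_comp_of_leftInverse hmeas (g := fun x => (restrict₂ inter_subset_right x, x))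
      (g' := Prod.snd) fun _ => rfl
  have hst : shannonEntropy μ
        (fun ω => ((fun i : ↥(s ∩ t) => V i ω), (fun i : s => V i ω), fun i : t => V i ω))
      = shannonEntropy μ (fun ω (i : ↥(s ∪ t)) => V i ω) :=
    shannonEntropy_comp_of_leftInverse hmeas
      (g := fun x => (restrict₂ (inter_subset_left.trans subset_union_left) x,
        restrict₂ subset_union_left x, restrict₂ subset_union_right x))
      (g' := fun y i => if h : i.1 ∈ s then y.2.1 ⟨i, h⟩
        else y.2.2 ⟨i, (mem_union.1 i.2).resolve_left h⟩)
      fun x => funext fun i => by dsimp only; split_ifs <;> rfl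
  rw [← hs, ← ht, ← hst]
  exact shannonEntropy_submodular hmeas hmeas hmeas

end Tuples

end Entropy

namespace Scheme

variable {P : Type} [Fintype P] [DecidableEq P] (S : Scheme P)

lemma Hset_mono {X Y : Finset P} (h : X ⊆ Y) : S.Hset X ≤ S.Hset Y :=
  letI := S.mΩ; haveI := S.prob; letI := S.shFin
  shannonEntropy_pi_mono S.share_meas h

lemma HsetS_mono {X Y : Finset P} (h : X ⊆ Y) : S.HsetS X ≤ S.HsetS Y :=
  letI := S.mΩ; haveI := S.prob; letI := S.secFin; letI := S.shFin
  shannonEntropy_pi_prodMk_mono S.share_meas S.secret_meas h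

lemma Hset_union_add_inter_le (X Y : Finset P) :
    S.Hset (X ∪ Y) + S.Hset (X ∩ Y) ≤ S.Hset X + S.Hset Y :=
  letI := S.mΩ; haveI := S.prob; letI := S.shFin
  shannonEntropy_pi_union_add_inter_le S.share_meas X Y

end Scheme

theorem add_two_unqualified_general {P : Type} [Fintype P] [DecidableEq P]
    (Γ : Finset P → Prop)
    (S : Scheme P) (hperf : S.IsPerfect Γ)
    (X : Finset P) (p q : P)
    (hp : ¬ Γ (X ∪ {p})) (hq : ¬ Γ (X ∪ {q})) (hq' : Γ (X ∪ {p, q})) :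
    2 * S.Hsec ≤ S.Hset (X ∪ {p, q}) - S.Hset X := by
  obtain ⟨hqual, hunqual⟩ := hperf
  have hSp := hunqual _ hp
  have hSq := hunqual _ hq
  have hSpq := hqual _ hq'
  have hunion : X ∪ {p} ∪ (X ∪ {q}) = X ∪ {p, q} := by
    ext
    simp only [mem_union, mem_singleton, mem_insert]
    tauto
  have hmono_p : S.HsetS (X ∪ {p}) ≤ S.HsetS (X ∪ {p, q}) :=
    S.HsetS_mono (hunion ▸ subset_union_left)
  have hmono_q : S.HsetS (X ∪ {q}) ≤ S.HsetS (X ∪ {p, q}) :=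
    S.HsetS_mono (hunion ▸ subset_union_right)
  have hmono_X : S.Hset X ≤ S.Hset ((X ∪ {p}) ∩ (X ∪ {q})) :=
    S.Hset_mono (subset_inter subset_union_left subset_union_left)
  have hsub := S.Hset_union_add_inter_le (X ∪ {p}) (X ∪ {q})
  rw [hunion] at hsub
  linarith

/-- If `X ⊆ P` is nonempty, `p ≠ q`, `X ∪ {p} ∉ Γ`, `X ∪ {q} ∉ Γ`, and
`X ∪ {p, q} ∈ Γ`, then `2 ≤ h(X ∪ {p, q}) − h(X)`, i.e.
`2·H(S) ≤ H(X ∪ {p, q}) − H(X)`. -/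
theorem add_two_unqualified {P : Type} [Fintype P] [DecidableEq P]
    (Γ : Finset P → Prop) (hΓ : ∀ X Y : Finset P, X ⊆ Y → Γ X → Γ Y)
    (S : Scheme P) (hperf : S.IsPerfect Γ) (hpos : 0 < S.Hsec)
    (X : Finset P) (p q : P) (hX : X.Nonempty) (hpq : p ≠ q)
    (hp : ¬ Γ (X ∪ {p})) (hq : ¬ Γ (X ∪ {q})) (hq' : Γ (X ∪ {p, q})) :
    2 * S.Hsec ≤ S.Hset (X ∪ {p, q}) - S.Hset X :=
  add_two_unqualified_general Γ S hperf X p q hp hq hq'
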